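/- arXiv:2211.17158 — 4 statements merged into one kernel-verified Lean document; each statement's English description precedes it below -/
import Mathlib

section
/- Let Φ be t-averaged with 1/2 < t ≤ 1 and 0 < γ < 1/(2t-1), and write R = (1/t)Φ - ((1-t)/t)·Id. Then for any y ∈ ℝⁿ, the map G(x) = (1/(1+γ-γt))·y - (γt/(1+γ-γt))·R(x) is a contraction (Lipschitz constant strictly less than 1), and its unique fixed point x satisfies x + γΦ(x) = y. -/
/-!
As `t ≠ 0`, `R` is determined by `Φ`, so it is the 1-Lipschitz map of the definition of
averagedness. Hence `x ↦ a • y - c • R x` is Lipschitz with constant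
`c = γt / (1 + γ - γt)`, and `c < 1` is exactly `γ (2t - 1) < 1`. Banach's fixed point theorem
gives the unique fixed point, and multiplying the fixed point equation by `1 + γ - γt` and
substituting `Φ = (1 - t) • Id + t • R` turns it into `x + γ • Φ x = y`.
-/

open scoped NNReal

/-- A map `Φ` on a normed space is `t`-averaged if `Φ = (1-t)•Id + t•R`
for some 1-Lipschitz map `R`. -/
def IsAveraged {E : Type*} [NormedAddCommGroup E] [NormedSpace ℝ E]
    (t : ℝ) (Φ : E → E) : Prop :=
  ∃ R : E → E, LipschitzWith 1 R ∧ ∀ x, Φ x = (1 - t) • x + t • R x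

section
variable {E : Type*} [NormedAddCommGroup E] [NormedSpace ℝ E]

lemma IsAveraged.lipschitzWith_one_of_eq {t : ℝ} {Φ R : E → E} (hΦ : IsAveraged t Φ)
    (ht : t ≠ 0) (hR : ∀ x, Φ x = (1 - t) • x + t • R x) : LipschitzWith 1 R := by
  obtain ⟨R₀, hR₀, hΦR₀⟩ := hΦ
  have : R = R₀ := funext fun x => smul_right_injective E ht <| by
    simpa only [hR, add_right_inj] using hΦR₀ x
  rwa [this]

lemma LipschitzWith.contractingWith_const_sub_smul {R : E → E} (hR : LipschitzWith 1 R)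
    (v : E) {K : ℝ≥0} (hK : K < 1) : ContractingWith K (fun x => v - (K : ℝ) • R x) := by
  refine ⟨hK, LipschitzWith.of_dist_le_mul fun a b => ?_⟩
  rw [dist_sub_left, dist_smul₀, Real.norm_of_nonneg K.coe_nonneg]
  gcongr
  simpa using hR.dist_le_mul a b

lemma eq_smul_add_smul_of_eq_sub_smul {t : ℝ} (ht : t ≠ 0) {p x r : E}
    (h : r = (1 / t) • p - ((1 - t) / t) • x) : p = (1 - t) • x + t • r := by
  subst h
  match_scalars <;> field_simp
  ring

lemma add_smul_eq_of_eq_sub_smul {t γ : ℝ} (hd : 1 + γ - γ * t ≠ 0) {x y r : E}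
    (hx : (1 / (1 + γ - γ * t)) • y - (γ * t / (1 + γ - γ * t)) • r = x) :
    x + γ • ((1 - t) • x + t • r) = y := by
  subst hx
  match_scalars <;> field_simp <;> ring

end

lemma one_add_sub_mul_pos_and_div_lt_one {t γ : ℝ} (ht : 1 / 2 < t) (hγ0 : 0 < γ)
    (hγ : γ < 1 / (2 * t - 1)) : 0 < 1 + γ - γ * t ∧ γ * t / (1 + γ - γ * t) < 1 := by
  have h : γ * (2 * t - 1) < 1 := (lt_div_iff₀ (by linarith)).mp hγ
  have hd : 0 < 1 + γ - γ * t := by nlinarith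
  exact ⟨hd, (div_lt_one hd).mpr (by linarith)⟩

theorem stmt_2_general (n : ℕ) (t γ : ℝ)
    (Φ R : EuclideanSpace ℝ (Fin n) → EuclideanSpace ℝ (Fin n))
    (hΦ : IsAveraged t Φ) (ht1 : 1 / 2 < t)
    (hγ0 : 0 < γ) (hγ : γ < 1 / (2 * t - 1))
    (hR : ∀ x, R x = (1 / t) • Φ x - ((1 - t) / t) • x)
    (y : EuclideanSpace ℝ (Fin n)) :
    (∃ K : NNReal, (K : ℝ) < 1 ∧
      LipschitzWith K (fun x => (1 / (1 + γ - γ * t)) • y -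
        (γ * t / (1 + γ - γ * t)) • R x)) ∧
    (∃! x : EuclideanSpace ℝ (Fin n),
      (1 / (1 + γ - γ * t)) • y - (γ * t / (1 + γ - γ * t)) • R x = x) ∧
    (∀ x, (1 / (1 + γ - γ * t)) • y - (γ * t / (1 + γ - γ * t)) • R x = x →
      x + γ • Φ x = y) := by
  have ht : t ≠ 0 := by linarith
  have hΦR : ∀ x, Φ x = (1 - t) • x + t • R x :=
    fun x => eq_smul_add_smul_of_eq_sub_smul ht (hR x)
  obtain ⟨hd, hc⟩ := one_add_sub_mul_pos_and_div_lt_one ht1 hγ0 hγ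
  set K : ℝ≥0 := ⟨γ * t / (1 + γ - γ * t), by positivity⟩
  have hG := (hΦ.lipschitzWith_one_of_eq ht hΦR).contractingWith_const_sub_smul
    ((1 / (1 + γ - γ * t)) • y) (K := K) hc
  refine ⟨⟨K, hc, hG.toLipschitzWith⟩,
    ⟨hG.fixedPoint _, hG.fixedPoint_isFixedPt, fun x hx => hG.fixedPoint_unique hx⟩,
    fun x hx => ?_⟩
  rw [hΦR]
  exact add_smul_eq_of_eq_sub_smul hd.ne' hx

theorem stmt_2 (n : ℕ) (t γ : ℝ)
    (Φ R : EuclideanSpace ℝ (Fin n) → EuclideanSpace ℝ (Fin n))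
    (hΦ : IsAveraged t Φ) (ht1 : 1 / 2 < t) (ht2 : t ≤ 1)
    (hγ0 : 0 < γ) (hγ : γ < 1 / (2 * t - 1))
    (hR : ∀ x, R x = (1 / t) • Φ x - ((1 - t) / t) • x)
    (y : EuclideanSpace ℝ (Fin n)) :
    (∃ K : NNReal, (K : ℝ) < 1 ∧
      LipschitzWith K (fun x => (1 / (1 + γ - γ * t)) • y -
        (γ * t / (1 + γ - γ * t)) • R x)) ∧
    (∃! x : EuclideanSpace ℝ (Fin n),
      (1 / (1 + γ - γ * t)) • y - (γ * t / (1 + γ - γ * t)) • R x = x) ∧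
    (∀ x, (1 / (1 + γ - γ * t)) • y - (γ * t / (1 + γ - γ * t)) • R x = x →
      x + γ • Φ x = y) :=
  stmt_2_general n t γ Φ R hΦ ht1 hγ0 hγ hR y
end

section
/- Let T ∈ ℝ^{m×n} with TTᵀ = I_m (so m ≤ n), let σ: ℝ → ℝ be differentiable, applied coordinatewise, and let L(x) = x + γ Tᵀσ(Tx + b) for γ > 0, b ∈ ℝᵐ. Then the determinant of the Jacobian of L at x equals ∏_{i=1}^{m} (1 + γ σ'((Tx+b)ᵢ)). -/
/-!
The Jacobian of `L` is `1 + γ Tᵀ D T` with `D` diagonal. Sylvester's identity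
`det (1 + A B) = det (1 + B A)` moves `T` around to give `det (1 + γ D T Tᵀ) = det (1 + γ D)`,
which is the product of the diagonal entries.
-/

open Matrix

theorem Matrix.det_one_add_mul_mul_of_mul_eq_one {R m n : Type*} [CommRing R]
    [Fintype m] [DecidableEq m] [Fintype n] [DecidableEq n] {A : Matrix n m R}
    {B : Matrix m n R} (hBA : B * A = 1) (D : Matrix m m R) :
    det (1 + A * D * B) = det (1 + D) := by
  rw [det_one_add_mul_comm, ← Matrix.mul_assoc, hBA, Matrix.one_mul]

section Jacobian

variable {ι κ : Type*} [Fintype ι] [DecidableEq ι] [Fintype κ]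

theorem hasFDerivAt_comp_mulVec_add [DecidableEq κ] {σ : ℝ → ℝ} (T : Matrix κ ι ℝ) (b : κ → ℝ)
    (x : ι → ℝ) (hσ : ∀ k, DifferentiableAt ℝ σ ((T *ᵥ x + b) k)) :
    HasFDerivAt (fun z k => σ ((T *ᵥ z + b) k))
      (toLin' (diagonal (fun k => deriv σ ((T *ᵥ x + b) k)) * T)).toContinuousLinearMap x := by
  refine hasFDerivAt_pi'' fun k => ?_
  have hT : HasFDerivAt (fun z => (T *ᵥ z + b) k)
      ((ContinuousLinearMap.proj k).comp (toLin' T).toContinuousLinearMap) x :=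
    (ContinuousLinearMap.proj (R := ℝ) (φ := fun _ : κ => ℝ) k).hasFDerivAt.comp x
      ((toLin' T).toContinuousLinearMap.hasFDerivAt.add_const b)
  refine ((hσ k).hasDerivAt.comp_hasFDerivAt x hT).congr_fderiv ?_
  ext v
  simp [-mulVec_mulVec, mulVec_diagonal]

theorem hasFDerivAt_add_smul_mulVec {g : (ι → ℝ) → κ → ℝ} {G : Matrix κ ι ℝ} {x : ι → ℝ}
    (hg : HasFDerivAt g (toLin' G).toContinuousLinearMap x) (A : Matrix ι κ ℝ) (γ : ℝ) :
    HasFDerivAt (fun z => z + γ • A *ᵥ g z)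
      (toLin' (1 + γ • (A * G))).toContinuousLinearMap x := by
  classical
  refine ((hasFDerivAt_id x).add
    (((toLin' A).toContinuousLinearMap.hasFDerivAt.comp x hg).const_smul γ)).congr_fderiv ?_
  ext v
  simp [mulVec_mulVec]

end Jacobian

theorem stmt_9_general (m n : ℕ) (T : Matrix (Fin m) (Fin n) ℝ) (hT : T * Tᵀ = 1)
    (σ : ℝ → ℝ) (hσ : Differentiable ℝ σ) (γ : ℝ)
    (b : Fin m → ℝ) (x : Fin n → ℝ) :
    LinearMap.det (fderiv ℝ
        (fun z : Fin n → ℝ => z + γ • Tᵀ.mulVec (fun i => σ ((T.mulVec z + b) i))) x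
      : (Fin n → ℝ) →ₗ[ℝ] (Fin n → ℝ)) =
    ∏ i : Fin m, (1 + γ * deriv σ ((T.mulVec x + b) i)) := by
  set d : Fin m → ℝ := fun i => deriv σ ((T *ᵥ x + b) i)
  have hL := hasFDerivAt_add_smul_mulVec (hasFDerivAt_comp_mulVec_add T b x fun i => hσ _) Tᵀ γ
  have hJ : γ • (Tᵀ * (diagonal d * T)) = Tᵀ * diagonal (γ • d) * T := by
    rw [diagonal_smul, Matrix.mul_smul, Matrix.smul_mul, Matrix.mul_assoc]
  rw [hL.fderiv, LinearMap.coe_toContinuousLinearMap, LinearMap.det_toLin', hJ,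
    det_one_add_mul_mul_of_mul_eq_one hT, ← diagonal_one, diagonal_add, det_diagonal]
  rfl

theorem stmt_9 (m n : ℕ) (T : Matrix (Fin m) (Fin n) ℝ) (hT : T * Tᵀ = 1)
    (σ : ℝ → ℝ) (hσ : Differentiable ℝ σ) (γ : ℝ) (hγ : 0 < γ)
    (b : Fin m → ℝ) (x : Fin n → ℝ) :
    LinearMap.det (fderiv ℝ
        (fun z : Fin n → ℝ => z + γ • Tᵀ.mulVec (fun i => σ ((T.mulVec z + b) i))) x
      : (Fin n → ℝ) →ₗ[ℝ] (Fin n → ℝ)) =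
    ∏ i : Fin m, (1 + γ * deriv σ ((T.mulVec x + b) i)) :=
  stmt_9_general m n T hT σ hσ γ b x
end

section
/- Let Q be a random variable on the positive integers with P(Q = k) > 0 for all k ≥ 1, and set p_k = P(Q ≥ k). Let (a_k)_{k≥1} be an absolutely summable real sequence. Then E_Q[∑_{k=1}^Q a_k / p_k] = ∑_{k=1}^∞ a_k (the Russian-roulette unbiased estimator of the infinite series). -/
/-!
Write the truncated sum as `∑ₖ a (k + 1) / p (k + 1) · 𝟙{Q > k}`. The terms are absolutely
integrable with total mass `∑ₖ |a (k + 1)| < ∞`, so integral and series commute, and each term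
integrates to `a (k + 1) / p (k + 1) · P(Q > k) = a (k + 1)`.
-/

open MeasureTheory

lemma tsum_indicator_Ioi_eq_sum_range (b : ℕ → ℝ) (q : ℕ) :
    ∑' k, (Set.Ioi k).indicator (fun _ => b k) q = ∑ k ∈ Finset.range q, b k := by
  rw [tsum_eq_sum (s := Finset.range q)]
  · exact Finset.sum_congr rfl fun k hk => Set.indicator_of_mem (Finset.mem_range.1 hk) _
  · intro k hk
    exact Set.indicator_of_notMem (by simpa using hk) _

lemma integral_sum_range_eq_tsum_mul_measureReal_Ioi (μ : Measure ℕ) [IsFiniteMeasure μ]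
    (b : ℕ → ℝ) (hb : Summable fun k => |b k| * μ.real (Set.Ioi k)) :
    ∫ q, ∑ k ∈ Finset.range q, b k ∂μ = ∑' k, b k * μ.real (Set.Ioi k) := by
  have integral_term (c : ℝ) (k : ℕ) :
      ∫ q, (Set.Ioi k).indicator (fun _ => c) q ∂μ = c * μ.real (Set.Ioi k) := by
    rw [integral_indicator_const _ measurableSet_Ioi, smul_eq_mul, mul_comm]
  have integrable_term (k : ℕ) : Integrable ((Set.Ioi k).indicator fun _ => b k) μ :=
    (integrable_const (b k)).indicator measurableSet_Ioi
  have integral_norm_term (k : ℕ) :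
      ∫ q, ‖(Set.Ioi k).indicator (fun _ => b k) q‖ ∂μ = |b k| * μ.real (Set.Ioi k) := by
    simp_rw [norm_indicator_eq_indicator_norm, integral_term, Real.norm_eq_abs]
  simp_rw [← tsum_indicator_Ioi_eq_sum_range,
    ← integral_tsum_of_summable_integral_norm integrable_term
      (by simpa only [integral_norm_term] using hb),
    integral_term]

lemma sum_Icc_one_eq_sum_range {M : Type*} [AddCommMonoid M] (f : ℕ → M) (q : ℕ) :
    ∑ k ∈ Finset.Icc 1 q, f k = ∑ k ∈ Finset.range q, f (k + 1) := by
  rw [Finset.range_eq_Ico, Finset.sum_Ico_add' f 0 q 1, zero_add, Finset.Ico_add_one_right_eq_Icc]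

lemma measureReal_Ici_pos {α : Type*} [Preorder α] [MeasurableSpace α] {μ : Measure α}
    [IsFiniteMeasure μ] {k : α} (hk : 0 < μ {k}) :
    0 < μ.real (Set.Ici k) :=
  ENNReal.toReal_pos (hk.trans_le (measure_mono (by simp))).ne' (measure_ne_top μ _)

theorem stmt_15_general (μ : Measure ℕ) [IsProbabilityMeasure μ]
    (hpos : ∀ k : ℕ, 1 ≤ k → 0 < μ {k})
    (a : ℕ → ℝ) (ha : Summable fun k => |a k|) :
    ∫ q : ℕ, (∑ k ∈ Finset.Icc 1 q, a k / (μ (Set.Ici k)).toReal) ∂μ =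
      ∑' k : ℕ, a (k + 1) := by
  have hp (k : ℕ) : 0 < μ.real (Set.Ioi k) := by
    simpa only [← Set.Ici_add_one_eq_Ioi] using measureReal_Ici_pos (hpos (k + 1) k.succ_pos)
  have weighted (k : ℕ) :
      |a (k + 1) / μ.real (Set.Ioi k)| * μ.real (Set.Ioi k) = |a (k + 1)| := by
    rw [abs_div, abs_of_pos (hp k), div_mul_cancel₀ _ (hp k).ne']
  simp_rw [sum_Icc_one_eq_sum_range, ← measureReal_def, Set.Ici_add_one_eq_Ioi]
  rw [integral_sum_range_eq_tsum_mul_measureReal_Ioi μ _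
    (by simpa only [weighted] using (summable_nat_add_iff 1).mpr ha)]
  simp_rw [div_mul_cancel₀ _ (hp _).ne']

theorem stmt_15 (μ : Measure ℕ) [IsProbabilityMeasure μ]
    (h0 : μ {0} = 0) (hpos : ∀ k : ℕ, 1 ≤ k → 0 < μ {k})
    (a : ℕ → ℝ) (ha : Summable fun k => |a k|) :
    ∫ q : ℕ, (∑ k ∈ Finset.Icc 1 q, a k / (μ (Set.Ici k)).toReal) ∂μ =
      ∑' k : ℕ, a (k + 1) :=
  stmt_15_general μ hpos a ha
end

section
/- Let σ: ℝ → ℝ be 1-Lipschitz, monotone increasing, with σ(0) = 0, applied componentwise, let T ∈ ℝ^{m×n} with TᵀT = Iₙ or TTᵀ = I_m, and b ∈ ℝᵐ. Then B(x) = Tᵀσ(Tx + b) is firmly nonexpansive, i.e., ‖B(x) − B(y)‖² ≤ ⟨B(x) − B(y), x − y⟩ for all x, y ∈ ℝⁿ. -/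
/-!
Write `w = σ(Tx + b) - σ(Ty + b)`, so that `B x - B y = Tᵀ w` and `⟪Tᵀ w, x - y⟫ = ⟪w, T(x - y)⟫`.
A monotone 1-Lipschitz `σ` is firmly nonexpansive in each coordinate, which gives
`‖w‖² ≤ ⟪w, T(x - y)⟫`, while `Tᵀ` is a contraction when `T` is semi-orthogonal, so that
`‖Tᵀ w‖² ≤ ‖w‖²`.
-/

open Matrix

lemma LipschitzWith.sub_mul_self_le_of_monotone {f : ℝ → ℝ} (hlip : LipschitzWith 1 f)
    (hmono : Monotone f) (a c : ℝ) :
    (f a - f c) * (f a - f c) ≤ (f a - f c) * (a - c) := by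
  have habs : |f a - f c| ≤ |a - c| := by
    simpa [Real.dist_eq] using hlip.dist_le_mul a c
  have hprod : 0 ≤ (f a - f c) * (a - c) := by
    rcases le_total a c with h | h
    · exact mul_nonneg_of_nonpos_of_nonpos (sub_nonpos.2 (hmono h)) (sub_nonpos.2 h)
    · exact mul_nonneg (sub_nonneg.2 (hmono h)) (sub_nonneg.2 h)
  calc (f a - f c) * (f a - f c) = |f a - f c| * |f a - f c| := (abs_mul_abs_self _).symm
    _ ≤ |f a - f c| * |a - c| := mul_le_mul_of_nonneg_left habs (abs_nonneg _)
    _ = (f a - f c) * (a - c) := by rw [← abs_mul, abs_of_nonneg hprod]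

lemma LipschitzWith.comp_sub_dotProduct_le_of_monotone {ι : Type*} [Fintype ι] {f : ℝ → ℝ}
    (hlip : LipschitzWith 1 f) (hmono : Monotone f) (u v : ι → ℝ) :
    (f ∘ u - f ∘ v) ⬝ᵥ (f ∘ u - f ∘ v) ≤ (f ∘ u - f ∘ v) ⬝ᵥ (u - v) :=
  Finset.sum_le_sum fun i _ => hlip.sub_mul_self_le_of_monotone hmono (u i) (v i)

section SemiOrthogonal

variable {ι κ R : Type*} [Fintype ι] [Fintype κ] [DecidableEq κ] [CommRing R] [LinearOrder R]
  [IsStrictOrderedRing R]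

/-- `w ⬝ w - ‖Tᵀ w‖²` is the squared norm of `w - T Tᵀ w`. -/
lemma Matrix.transpose_mulVec_dotProduct_self_le_of_transpose_mul_self_eq_one
    {T : Matrix ι κ R} (hT : Tᵀ * T = 1) (w : ι → R) :
    Tᵀ *ᵥ w ⬝ᵥ Tᵀ *ᵥ w ≤ w ⬝ᵥ w := by
  have hcross : w ⬝ᵥ T *ᵥ (Tᵀ *ᵥ w) = Tᵀ *ᵥ w ⬝ᵥ Tᵀ *ᵥ w := by
    rw [dotProduct_mulVec, mulVec_transpose]
  have hiso : T *ᵥ (Tᵀ *ᵥ w) ⬝ᵥ T *ᵥ (Tᵀ *ᵥ w) = Tᵀ *ᵥ w ⬝ᵥ Tᵀ *ᵥ w := by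
    rw [dotProduct_mulVec, ← mulVec_transpose, mulVec_mulVec, hT, one_mulVec]
  have hsq : 0 ≤ (w - T *ᵥ (Tᵀ *ᵥ w)) ⬝ᵥ (w - T *ᵥ (Tᵀ *ᵥ w)) :=
    Finset.sum_nonneg fun i _ => mul_self_nonneg _
  rw [sub_dotProduct, dotProduct_sub, dotProduct_sub, hiso, dotProduct_comm (T *ᵥ _) w,
    hcross] at hsq
  linarith

lemma Matrix.transpose_mulVec_dotProduct_self_le [DecidableEq ι] {T : Matrix ι κ R}
    (hT : Tᵀ * T = 1 ∨ T * Tᵀ = 1) (w : ι → R) :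
    Tᵀ *ᵥ w ⬝ᵥ Tᵀ *ᵥ w ≤ w ⬝ᵥ w := by
  rcases hT with hT | hT
  · exact transpose_mulVec_dotProduct_self_le_of_transpose_mul_self_eq_one hT w
  · rw [dotProduct_mulVec, ← mulVec_transpose, transpose_transpose, mulVec_mulVec, hT,
      one_mulVec]

end SemiOrthogonal

theorem stmt_19_general (m n : ℕ) (σ : ℝ → ℝ)
    (hσlip : LipschitzWith 1 σ) (hσmono : Monotone σ)
    (T : Matrix (Fin m) (Fin n) ℝ) (hT : Tᵀ * T = 1 ∨ T * Tᵀ = 1)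
    (b : Fin m → ℝ)
    (B : (Fin n → ℝ) → (Fin n → ℝ))
    (hB : ∀ x, B x = Tᵀ.mulVec (fun i => σ ((T.mulVec x + b) i))) :
    ∀ x y : Fin n → ℝ,
      (B x - B y) ⬝ᵥ (B x - B y) ≤ (B x - B y) ⬝ᵥ (x - y) := by
  intro x y
  set w := σ ∘ (T *ᵥ x + b) - σ ∘ (T *ᵥ y + b)
  have hBw : B x - B y = Tᵀ *ᵥ w := by
    rw [hB, hB, mulVec_sub]
    rfl
  have hshift : T *ᵥ (x - y) = (T *ᵥ x + b) - (T *ᵥ y + b) := by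
    rw [mulVec_sub, add_sub_add_right_eq_sub]
  calc (B x - B y) ⬝ᵥ (B x - B y) = Tᵀ *ᵥ w ⬝ᵥ Tᵀ *ᵥ w := by rw [hBw]
    _ ≤ w ⬝ᵥ w := transpose_mulVec_dotProduct_self_le hT w
    _ ≤ w ⬝ᵥ T *ᵥ (x - y) := by
      rw [hshift]; exact hσlip.comp_sub_dotProduct_le_of_monotone hσmono _ _
    _ = (B x - B y) ⬝ᵥ (x - y) := by rw [hBw, dotProduct_mulVec, mulVec_transpose]

theorem stmt_19 (m n : ℕ) (σ : ℝ → ℝ)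
    (hσlip : LipschitzWith 1 σ) (hσmono : Monotone σ) (hσ0 : σ 0 = 0)
    (T : Matrix (Fin m) (Fin n) ℝ) (hT : Tᵀ * T = 1 ∨ T * Tᵀ = 1)
    (b : Fin m → ℝ)
    (B : (Fin n → ℝ) → (Fin n → ℝ))
    (hB : ∀ x, B x = Tᵀ.mulVec (fun i => σ ((T.mulVec x + b) i))) :
    ∀ x y : Fin n → ℝ,
      (B x - B y) ⬝ᵥ (B x - B y) ≤ (B x - B y) ⬝ᵥ (x - y) :=
  stmt_19_general m n σ hσlip hσmono T hT b B hB
end
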